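/- For a local renormalisation operator R built from a counterterm map r via R(τ) = q_F τ + Σ_{τ'} r(τ') C₋(τ',τ), the coproduct intertwines with R: for every product tree τ ∈ 𝒩̊ ∪ 𝒲̊, Δ R τ = (R ⊗ Id) Δ τ. -/

import Mathlib

/-- Trees built from generators `𝟏`, `X i`, `Ξ` by the ternary product
`τ₁,τ₂,τ₃ ↦ I(τ₁)I(τ₂)I(τ₃)`. -/
inductive T (d : ℕ) : Type
  | one : T d
  | X : Fin d → T d
  | Xi : T d
  | prod : T d → T d → T d → T d
deriving DecidableEq

namespace T

variable {d : ℕ}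

/-- The order of a tree, with parameter `δ`. -/
noncomputable def order (δ : ℝ) : T d → ℝ
  | one => -2
  | X _ => -1
  | Xi => -3 + δ
  | prod a b c => 6 + order δ a + order δ b + order δ c

/-- Number of `𝟏`-leaves. -/
def mOne : T d → ℕ
  | one => 1
  | X _ => 0
  | Xi => 0
  | prod a b c => mOne a + mOne b + mOne c

/-- Total number of `X i`-leaves. -/
def mX : T d → ℕ
  | one => 0
  | X _ => 1
  | Xi => 0
  | prod a b c => mX a + mX b + mX c

/-- Number of noise leaves `Ξ`. -/
def mXi : T d → ℕ
  | one => 0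
  | X _ => 0
  | Xi => 1
  | prod a b c => mXi a + mXi b + mXi c

end T

namespace T
/-- Whether a tree is a ternary product (i.e. not a generator). -/
def isProd {d : ℕ} : T d → Bool
  | prod _ _ _ => true
  | _ => false

/-- Membership in `Ñ`: ternary-product trees of order in `(-1, 0)`. -/
def inTildeN {d : ℕ} (δ : ℝ) (τ : T d) : Prop :=
  isProd τ = true ∧ -1 < order δ τ ∧ order δ τ < 0

noncomputable instance {d : ℕ} (δ : ℝ) (τ : T d) : Decidable (inTildeN δ τ) := by
  unfold inTildeN; infer_instance
end T

/-- Planted trees with the two kinds of derivative edges: `I(τ)`, `I⁺ᵢ(τ)` and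
`I⁻ᵢ(τ)`. -/
inductive PTm (d : ℕ) : Type
  | I : T d → PTm d
  | Ip : Fin d → T d → PTm d
  | Im : Fin d → T d → PTm d
deriving DecidableEq

/-- The product on `Vec(𝒯ₗ) ⊗ Alg`: three terms `I(τᵢ) ⊗ aᵢ` are combined into
`I(τ₁)I(τ₂)I(τ₃) ⊗ a₁·a₂·a₃`.  A planted tree `I(τ̄)` in the left factor is
represented by its argument `τ̄`, a forest by a list of planted trees. -/
noncomputable def mulE {d : ℕ} (f g h : (T d × List (PTm d)) →₀ ℝ) :
    (T d × List (PTm d)) →₀ ℝ :=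
  f.sum fun p cp => g.sum fun q cq => h.sum fun s cs =>
    Finsupp.single (T.prod p.1 q.1 s.1, p.2 ++ q.2 ++ s.2) (cp * cq * cs)

/-- The coproduct `Δ I(τ)` of a planted tree; a basis element
`I(τ̄) ⊗ (σ₁ ⋯ σₙ)` is recorded as the pair `(τ̄, [σ₁, …, σₙ])`. -/
noncomputable def DI {d : ℕ} (δ : ℝ) : T d → (T d × List (PTm d)) →₀ ℝ
  | T.one => Finsupp.single (T.one, [PTm.I T.one]) 1
  | T.X i =>
      Finsupp.single (T.one, [PTm.I (T.X i)]) 1 +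
        Finsupp.single (T.X i, [PTm.Ip i (T.X i)]) 1
  | T.Xi => Finsupp.single (T.Xi, []) 1
  | T.prod a b c =>
      if T.order δ (T.prod a b c) < -2 then
        Finsupp.single (T.prod a b c, []) 1
      else
        Finsupp.single (T.one, [PTm.I (T.prod a b c)]) 1 +
          (if T.inTildeN δ (T.prod a b c) then
            ∑ i : Fin d, Finsupp.single (T.X i, [PTm.Ip i (T.prod a b c)]) 1
          else 0) +
          mulE (DI δ a) (DI δ b) (DI δ c)

/-- The coproduct `Δτ` of an unplanted tree `τ ∈ 𝒯ᵣ` (with the conventions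
`Δ𝟏 = ΔXᵢ = 0` for the bare generators, which do not belong to `𝒯ᵣ`). -/
noncomputable def Du {d : ℕ} (δ : ℝ) : T d → (T d × List (PTm d)) →₀ ℝ
  | T.one => 0
  | T.X _ => 0
  | T.Xi => Finsupp.single (T.Xi, []) 1
  | T.prod a b c => mulE (DI δ a) (DI δ b) (DI δ c)

/-- The trees `τ` for which the symbol `I⁺ᵢ(τ)` is nonzero: `τ = Xᵢ` or `τ ∈ Ñ`. -/
def ipOk {d : ℕ} (δ : ℝ) (i : Fin d) (τ : T d) : Prop :=
  τ = T.X i ∨ T.inTildeN δ τ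

noncomputable instance {d : ℕ} (δ : ℝ) (i : Fin d) (τ : T d) :
    Decidable (ipOk δ i τ) := by unfold ipOk; infer_instance

/-- The coproduct `Δ I⁺ᵢ(τ)`. -/
noncomputable def DIp {d : ℕ} (δ : ℝ) (i : Fin d) (τ : T d) :
    (PTm d × List (PTm d)) →₀ ℝ :=
  if τ = T.X i then
    Finsupp.single (PTm.Ip i (T.X i), [PTm.Ip i (T.X i)]) 1
  else if T.inTildeN δ τ then
    Finsupp.single (PTm.Ip i (T.X i), [PTm.Ip i τ]) 1 +
      (Du δ τ).sum fun p c =>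
        if ipOk δ i p.1 then Finsupp.single (PTm.Ip i p.1, p.2) c else 0
  else 0

/-- The embedding `τ̄ ↦ I⁻ᵢ(τ̄)` with the conventions `I⁻ᵢ(𝟏) = 0`,
`I⁻ᵢ(X_j) = 0` for `j ≠ i`, and `I⁻ᵢ(Xᵢ) = I⁺ᵢ(Xᵢ)`. -/
def imEmb {d : ℕ} (i : Fin d) : T d → Option (PTm d)
  | T.one => none
  | T.X j => if j = i then some (PTm.Ip i (T.X i)) else none
  | τ => some (PTm.Im i τ)

/-- The coproduct on planted trees, including the derivative edges `I⁻ᵢ`: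
`Δ I⁻ᵢ(τ) = (I⁻ᵢ ⊗ Id)Δτ + I⁺ᵢ(Xᵢ) ⊗ I⁺ᵢ(τ)`. -/
noncomputable def DPm {d : ℕ} (δ : ℝ) : PTm d → (PTm d × List (PTm d)) →₀ ℝ
  | PTm.I τ => (DI δ τ).sum fun p c => Finsupp.single (PTm.I p.1, p.2) c
  | PTm.Ip i τ => DIp δ i τ
  | PTm.Im i τ =>
      match τ with
      | T.one => 0
      | T.X j => if j = i then DIp δ i (T.X i) else 0
      | τ =>
          ((Du δ τ).sum fun p c =>
            match imEmb i p.1 with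
            | some q => Finsupp.single (q, p.2) c
            | none => 0) +
          (if T.inTildeN δ τ then
            Finsupp.single (PTm.Ip i (T.X i), [PTm.Ip i τ]) 1
          else 0)

/-- The coproduct extended multiplicatively to forests of planted trees. -/
noncomputable def DFm {d : ℕ} (δ : ℝ) :
    List (PTm d) → (List (PTm d) × List (PTm d)) →₀ ℝ
  | [] => Finsupp.single ([], []) 1
  | p :: rest =>
      (DPm δ p).sum fun q cq => (DFm δ rest).sum fun s cs =>
        Finsupp.single (q.1 :: s.1, q.2 ++ s.2) (cq * cs)

/-- The modified cut map `C₋(τ̄, τ)` (no projection onto positive order), with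
the conventions for the edges `I⁻ᵢ` built in. -/
def Cminus {d : ℕ} : T d → T d → Option (List (PTm d))
  | T.one, T.one => some [PTm.I T.one]
  | T.one, T.X j => some [PTm.I (T.X j)]
  | T.one, T.Xi => some [PTm.I T.Xi]
  | T.one, T.prod x y z => some [PTm.I (T.prod x y z)]
  | T.X i, T.X j => if j = i then some [PTm.Ip i (T.X i)] else none
  | T.X i, T.Xi => some [PTm.Im i T.Xi]
  | T.X i, T.prod x y z => some [PTm.Im i (T.prod x y z)]
  | T.Xi, T.Xi => some []
  | T.prod a b c, T.prod x y z =>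
      match Cminus a x, Cminus b y, Cminus c z with
      | some f1, some f2, some f3 => some (f1 ++ f2 ++ f3)
      | _, _, _ => none
  | _, _ => none

/-- A finite set containing every tree `τ̄ ≤ τ`. -/
def subs {d : ℕ} : T d → Finset (T d)
  | T.one => {T.one}
  | T.X i => {T.one, T.X i}
  | T.Xi => {T.one, T.Xi} ∪ Finset.univ.image (fun i : Fin d => T.X i)
  | T.prod a b c =>
      ({T.one} ∪ Finset.univ.image (fun i : Fin d => T.X i)) ∪
        ((subs a ×ˢ subs b ×ˢ subs c).image fun p => T.prod p.1 p.2.1 p.2.2)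

/-- `τ` is not a generator `X i`. -/
def noXgen {d : ℕ} : T d → Prop
  | T.X _ => False
  | _ => True

/-- Membership in the set `𝒬` of "non-trivial products": ternary products
`I(τ₁)I(τ₂)I(τ₃) ∈ 𝒩̊ ∪ 𝒲̊` with no factor `Xᵢ` and at most one factor `𝟏`. -/
def Qcond {d : ℕ} (δ : ℝ) : T d → Prop
  | T.prod a b c =>
      (noXgen a ∧ noXgen b ∧ noXgen c) ∧
        ((if a = T.one then 1 else 0) + (if b = T.one then 1 else 0) +
            (if c = T.one then 1 else 0) ≤ (1 : ℕ)) ∧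
        T.order δ (T.prod a b c) ≤ 0
  | _ => False

/-- Equality of trees up to permutations of the ternary tree product. -/
inductive TEquiv {d : ℕ} : T d → T d → Prop
  | one : TEquiv T.one T.one
  | X (i : Fin d) : TEquiv (T.X i) (T.X i)
  | Xi : TEquiv T.Xi T.Xi
  | prod {a b c x y z : T d} :
      TEquiv a x → TEquiv b y → TEquiv c z →
      TEquiv (T.prod a b c) (T.prod x y z)
  | swap12 (a b c : T d) : TEquiv (T.prod a b c) (T.prod b a c)
  | swap23 (a b c : T d) : TEquiv (T.prod a b c) (T.prod a c b)
  | trans {s t u : T d} : TEquiv s t → TEquiv t u → TEquiv s u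

/-- The local renormalisation operator `R` built from the counterterm map `r`:
`R(τ) = q_F τ + Σ_{τ'} r(τ') C₋(τ', τ)` for ternary products `τ`, as an element
of `Alg(𝒯ₗ,₋)`. -/
noncomputable def Rmap {d : ℕ} (r : T d → ℝ) : T d → (List (PTm d)) →₀ ℝ
  | T.prod a b c =>
      Finsupp.single [PTm.I a, PTm.I b, PTm.I c] 1 +
        ∑ τ' ∈ subs (T.prod a b c),
          r τ' • (match Cminus τ' (T.prod a b c) with
            | some f => Finsupp.single f (1 : ℝ)
            | none => 0)
  | _ => 0

/-!
Both sides are linear in the counterterms, so the `q_F` part and each cut `C₋(τ', τ)` can be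
compared separately. For `q_F` this is multiplicativity of `Δ`. For the cuts the key identity is
the co-interaction `Δ C₋(σ, ρ) = (C₋(σ, ·) ⊗ Id) Δ I(ρ)`, proved by induction on `σ`: `Ξ` and
trees of order `< -2` have trivial coproduct and so has every forest cut out of them (every tree
has order `> -3`, so the branches of a tree of order `< -2` have order `< -2` too); for
`σ = Xᵢ` the right side is `(I⁻ᵢ ⊗ Id)Δρ + I⁺ᵢ(Xᵢ) ⊗ I⁺ᵢ(ρ)`, which is how `Δ I⁻ᵢ(ρ)` is
defined; and for products both sides factor over the three branches. As `r` is supported on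
products, only product trees `σ` occur, and those annihilate the extra terms `𝟏 ⊗ I(ρ)` and
`Xⱼ ⊗ I⁺ⱼ(ρ)` of `Δ I(ρ)` that are not in `Δρ`.
-/

open Finsupp (single mapDomain)

section LinearCombination

variable {α γ ι R M : Type*} [CommSemiring R] [AddCommMonoid M] [Module R M]

/-- `Finsupp.linearCombination` with the coefficients first, so that nested sums read left to
right: `lcomb F u = ∑ₓ F x • u x`. -/
noncomputable def lcomb (F : α →₀ R) (u : α → M) : M := Finsupp.linearCombination R u F

theorem lcomb_eq_sum (F : α →₀ R) (u : α → M) : lcomb F u = F.sum fun x c => c • u x :=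
  Finsupp.linearCombination_apply R F

@[simp]
theorem lcomb_single (a : α) (c : R) (u : α → M) : lcomb (single a c) u = c • u a :=
  Finsupp.linearCombination_single R c a

@[simp]
theorem lcomb_zero_left (u : α → M) : lcomb (0 : α →₀ R) u = 0 :=
  map_zero _

@[simp]
theorem lcomb_zero_right (F : α →₀ R) : lcomb F (fun _ => (0 : M)) = 0 :=
  Finsupp.linearCombination_zero_apply R F

theorem lcomb_add_left (F G : α →₀ R) (u : α → M) : lcomb (F + G) u = lcomb F u + lcomb G u :=
  map_add _ F G

theorem lcomb_smul_left (c : R) (F : α →₀ R) (u : α → M) : lcomb (c • F) u = c • lcomb F u :=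
  map_smul _ c F

theorem lcomb_sum_left (s : Finset ι) (F : ι → α →₀ R) (u : α → M) :
    lcomb (∑ i ∈ s, F i) u = ∑ i ∈ s, lcomb (F i) u :=
  map_sum _ F s

theorem lcomb_congr {F : α →₀ R} {u v : α → M} (h : ∀ x ∈ F.support, u x = v x) :
    lcomb F u = lcomb F v := by
  simp only [lcomb_eq_sum]
  exact Finsupp.sum_congr fun x hx => by rw [h x hx]

theorem lcomb_add_right (F : α →₀ R) (u v : α → M) :
    lcomb F (fun x => u x + v x) = lcomb F u + lcomb F v := by
  simp only [lcomb_eq_sum, smul_add, Finsupp.sum_add]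

theorem lcomb_smul_right (F : α →₀ R) (c : R) (u : α → M) :
    lcomb F (fun x => c • u x) = c • lcomb F u := by
  simp only [lcomb_eq_sum, Finsupp.smul_sum, smul_comm c]

theorem lcomb_sum_right (F : α →₀ R) (s : Finset ι) (v : ι → α → M) :
    lcomb F (fun x => ∑ i ∈ s, v i x) = ∑ i ∈ s, lcomb F (v i) := by
  simp only [lcomb_eq_sum, Finset.smul_sum]
  exact Finset.sum_comm

theorem lcomb_lcomb (F : α →₀ R) (G : α → γ →₀ R) (u : γ → M) :
    lcomb (lcomb F G) u = lcomb F fun x => lcomb (G x) u :=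
  Finsupp.linearCombination_linearCombination (R := R) u G F

theorem lcomb_comm (F : α →₀ R) (G : γ →₀ R) (v : α → γ → M) :
    lcomb F (fun x => lcomb G (v x)) = lcomb G fun y => lcomb F fun x => v x y := by
  simp only [lcomb_eq_sum, Finsupp.smul_sum]
  rw [Finsupp.sum_comm]
  exact Finsupp.sum_congr fun y _ => Finsupp.sum_congr fun x _ => smul_comm _ _ _

theorem lcomb_single_one (F : α →₀ R) : lcomb F (fun x => single x 1) = F := by
  simp only [lcomb_eq_sum, Finsupp.smul_single_one]
  exact Finsupp.sum_single F

theorem exists_mem_support_of_mem_support_lcomb {β : Type*} {F : α →₀ R} {u : α → β →₀ R}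
    {b : β} (hb : b ∈ (lcomb F u).support) : ∃ x ∈ F.support, b ∈ (u x).support := by
  classical
  rw [lcomb_eq_sum] at hb
  obtain ⟨x, hx, hbx⟩ := Finset.mem_biUnion.1 (Finsupp.support_sum hb)
  exact ⟨x, hx, Finsupp.support_smul hbx⟩

theorem mapDomain_eq_lcomb {β : Type*} (f : α → β) (F : α →₀ R) :
    mapDomain f F = lcomb F fun x => single (f x) 1 := by
  simp only [lcomb_eq_sum, Finsupp.smul_single_one]
  rfl

end LinearCombination

section Forests

variable {d : ℕ} {δ : ℝ}

/-- The product on `Alg(𝒯ₗ,₋) ⊗ Alg(𝒯ₗ,₋)`: forests are concatenated in each factor. -/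
noncomputable def forestMul (A B : (List (PTm d) × List (PTm d)) →₀ ℝ) :
    (List (PTm d) × List (PTm d)) →₀ ℝ :=
  lcomb A fun x => lcomb B fun y => single (x.1 ++ y.1, x.2 ++ y.2) 1

@[simp]
theorem forestMul_zero_left (B : (List (PTm d) × List (PTm d)) →₀ ℝ) : forestMul 0 B = 0 :=
  lcomb_zero_left _

@[simp]
theorem forestMul_zero_right (A : (List (PTm d) × List (PTm d)) →₀ ℝ) : forestMul A 0 = 0 := by
  simp [forestMul]

theorem forestMul_single_left (x : List (PTm d) × List (PTm d)) (c : ℝ)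
    (B : (List (PTm d) × List (PTm d)) →₀ ℝ) :
    forestMul (single x c) B = c • lcomb B fun y => single (x.1 ++ y.1, x.2 ++ y.2) 1 :=
  lcomb_single _ _ _

theorem forestMul_single_single (x y : List (PTm d) × List (PTm d)) (c e : ℝ) :
    forestMul (single x c) (single y e) = single (x.1 ++ y.1, x.2 ++ y.2) (c * e) := by
  simp [forestMul_single_left, Finsupp.smul_single]

theorem forestMul_lcomb_left {α : Type*} (F : α →₀ ℝ)
    (u : α → (List (PTm d) × List (PTm d)) →₀ ℝ) (B : (List (PTm d) × List (PTm d)) →₀ ℝ) :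
    forestMul (lcomb F u) B = lcomb F fun x => forestMul (u x) B :=
  lcomb_lcomb _ _ _

theorem forestMul_lcomb_right {α : Type*} (F : α →₀ ℝ)
    (u : α → (List (PTm d) × List (PTm d)) →₀ ℝ) (A : (List (PTm d) × List (PTm d)) →₀ ℝ) :
    forestMul A (lcomb F u) = lcomb F fun x => forestMul A (u x) := by
  unfold forestMul
  simp only [lcomb_lcomb]
  exact lcomb_comm _ _ _

@[simp]
theorem DFm_nil : DFm δ ([] : List (PTm d)) = single ([], []) 1 :=
  rfl

theorem DFm_cons (p : PTm d) (l : List (PTm d)) :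
    DFm δ (p :: l) =
      lcomb (DPm δ p) fun q => lcomb (DFm δ l) fun s => single (q.1 :: s.1, q.2 ++ s.2) 1 := by
  simp only [DFm, lcomb_eq_sum, Finsupp.smul_sum, Finsupp.smul_single, smul_eq_mul, mul_one]

theorem DFm_singleton (p : PTm d) :
    DFm δ [p] = lcomb (DPm δ p) fun q => single ([q.1], q.2) 1 := by
  rw [DFm_cons]
  refine lcomb_congr fun q _ => ?_
  simp

theorem DFm_append (l₁ l₂ : List (PTm d)) :
    DFm δ (l₁ ++ l₂) = forestMul (DFm δ l₁) (DFm δ l₂) := by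
  induction l₁ with
  | nil => simp [forestMul_single_left, lcomb_single_one]
  | cons p l₁ ih =>
    rw [List.cons_append, DFm_cons, DFm_cons, ih, forestMul_lcomb_left]
    refine lcomb_congr fun q _ => ?_
    simp only [forestMul, lcomb_lcomb, lcomb_single, one_smul]
    simp [List.append_assoc]

end Forests

section Coproduct

variable {d : ℕ} {δ : ℝ}

theorem lcomb_Du_prod {M : Type*} [AddCommMonoid M] [Module ℝ M] (a b c : T d)
    (u : T d × List (PTm d) → M) :
    lcomb (Du δ (T.prod a b c)) u =
      lcomb (DI δ a) fun p => lcomb (DI δ b) fun q => lcomb (DI δ c) fun s =>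
        u (T.prod p.1 q.1 s.1, p.2 ++ q.2 ++ s.2) := by
  have hmulE : Du δ (T.prod a b c) =
      lcomb (DI δ a) fun p => lcomb (DI δ b) fun q => lcomb (DI δ c) fun s =>
        single (T.prod p.1 q.1 s.1, p.2 ++ q.2 ++ s.2) 1 := by
    simp only [Du, mulE, lcomb_eq_sum, Finsupp.smul_sum, Finsupp.smul_single, smul_eq_mul,
      mul_one, mul_assoc]
  simp only [hmulE, lcomb_lcomb, lcomb_single, one_smul]

theorem lcomb_DI_one {M : Type*} [AddCommMonoid M] [Module ℝ M] (u : T d × List (PTm d) → M) :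
    lcomb (DI δ T.one) u = u (T.one, [PTm.I T.one]) := by
  simp [DI]

theorem lcomb_DI_X {M : Type*} [AddCommMonoid M] [Module ℝ M] (i : Fin d)
    (u : T d × List (PTm d) → M) :
    lcomb (DI δ (T.X i)) u = u (T.one, [PTm.I (T.X i)]) + u (T.X i, [PTm.Ip i (T.X i)]) := by
  simp [DI, lcomb_add_left]

theorem DPm_Im_prod (i : Fin d) (x y z : T d) :
    DPm δ (PTm.Im i (T.prod x y z)) =
      (lcomb (Du δ (T.prod x y z)) fun p => (imEmb i p.1).elim 0 fun q => single (q, p.2) 1) +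
        if T.inTildeN δ (T.prod x y z) then
          single (PTm.Ip i (T.X i), [PTm.Ip i (T.prod x y z)]) 1 else 0 := by
  simp only [DPm, lcomb_eq_sum]
  congr 1
  refine Finsupp.sum_congr fun p _ => ?_
  cases imEmb i p.1 <;> simp

end Coproduct

section TrivialCoproduct

variable {d : ℕ} {δ : ℝ}

theorem T.neg_three_lt_order (hδ : 0 < δ) (τ : T d) : -3 < T.order δ τ := by
  induction τ with
  | one | X => norm_num [T.order]
  | Xi => simp only [T.order]; linarith
  | prod a b c iha ihb ihc => simp only [T.order]; linarith

/-- The trees `ρ` whose coproduct is trivial, `Δρ = ΔI(ρ) = ρ ⊗ 𝟏`. -/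
def TrivialCoproduct (δ : ℝ) (ρ : T d) : Prop := T.order δ ρ < -2 ∨ ρ = T.Xi

theorem TrivialCoproduct.of_prod (hδ : 0 < δ) {x y z : T d}
    (h : TrivialCoproduct δ (T.prod x y z)) :
    TrivialCoproduct δ x ∧ TrivialCoproduct δ y ∧ TrivialCoproduct δ z := by
  have hx := T.neg_three_lt_order hδ x
  have hy := T.neg_three_lt_order hδ y
  have hz := T.neg_three_lt_order hδ z
  simp only [TrivialCoproduct, T.order, reduceCtorEq, or_false] at h
  exact ⟨.inl (by linarith), .inl (by linarith), .inl (by linarith)⟩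

theorem TrivialCoproduct.order_lt {ρ : T d} (h : TrivialCoproduct δ ρ) (hρ : ρ ≠ T.Xi) :
    T.order δ ρ < -2 :=
  h.resolve_right hρ

theorem DI_of_trivialCoproduct {ρ : T d} (h : TrivialCoproduct δ ρ) :
    DI δ ρ = single (ρ, []) 1 := by
  cases ρ with
  | Xi => rfl
  | prod => rw [DI, if_pos (h.order_lt (by simp))]
  | _ => simp [TrivialCoproduct, T.order] at h

theorem Du_of_trivialCoproduct (hδ : 0 < δ) {ρ : T d} (h : TrivialCoproduct δ ρ) :
    Du δ ρ = single (ρ, []) 1 := by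
  cases ρ with
  | Xi => rfl
  | prod x y z =>
    obtain ⟨hx, hy, hz⟩ := h.of_prod hδ
    rw [← lcomb_single_one (Du δ _), lcomb_Du_prod, DI_of_trivialCoproduct hx,
      DI_of_trivialCoproduct hy, DI_of_trivialCoproduct hz]
    simp
  | _ => simp [TrivialCoproduct, T.order] at h

theorem DPm_Im_of_trivialCoproduct (hδ : 0 < δ) (i : Fin d) {ρ : T d}
    (h : TrivialCoproduct δ ρ) :
    DPm δ (PTm.Im i ρ) = single (PTm.Im i ρ, []) 1 := by
  cases ρ with
  | Xi => simp [DPm, Du, imEmb, T.inTildeN, T.isProd]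
  | prod x y z =>
    have hN : ¬ T.inTildeN δ (T.prod x y z) := fun hN => by
      linarith [hN.2.1, h.order_lt (by simp)]
    simp [DPm_Im_prod, Du_of_trivialCoproduct hδ h, hN, imEmb]
  | _ => simp [TrivialCoproduct, T.order] at h

end TrivialCoproduct

section Cuts

variable {d : ℕ} {δ : ℝ}

/-- `C₋(σ, ρ)` as an element of `Alg(𝒯ₗ,₋)`, zero where the cut map is undefined. -/
noncomputable def cutVec (σ ρ : T d) : List (PTm d) →₀ ℝ :=
  match Cminus σ ρ with
  | some f => single f 1
  | none => 0

noncomputable def DAlg (δ : ℝ) (A : List (PTm d) →₀ ℝ) : (List (PTm d) × List (PTm d)) →₀ ℝ :=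
  lcomb A (DFm δ)

theorem cutVec_one_left (ρ : T d) : cutVec T.one ρ = single [PTm.I ρ] 1 := by
  cases ρ <;> rfl

theorem Cminus_prod_prod_eq_some {s₁ s₂ s₃ x y z : T d} {f : List (PTm d)}
    (h : Cminus (T.prod s₁ s₂ s₃) (T.prod x y z) = some f) :
    ∃ f₁ f₂ f₃, Cminus s₁ x = some f₁ ∧ Cminus s₂ y = some f₂ ∧ Cminus s₃ z = some f₃ ∧
      f = f₁ ++ f₂ ++ f₃ := by
  simp only [Cminus] at h
  split at h <;> simp_all

theorem mapDomain_cutVec_prod (s₁ s₂ s₃ x y z : T d) (g₁ g₂ g₃ : List (PTm d)) :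
    mapDomain (·, g₁ ++ g₂ ++ g₃) (cutVec (T.prod s₁ s₂ s₃) (T.prod x y z)) =
      forestMul (forestMul (mapDomain (·, g₁) (cutVec s₁ x)) (mapDomain (·, g₂) (cutVec s₂ y)))
        (mapDomain (·, g₃) (cutVec s₃ z)) := by
  simp only [cutVec, Cminus]
  rcases Cminus s₁ x with _ | f₁ <;> rcases Cminus s₂ y with _ | f₂ <;>
    rcases Cminus s₃ z with _ | f₃ <;> simp [forestMul_single_single]

theorem DAlg_cutVec_prod_prod (s₁ s₂ s₃ x y z : T d) :
    DAlg δ (cutVec (T.prod s₁ s₂ s₃) (T.prod x y z)) =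
      forestMul (forestMul (DAlg δ (cutVec s₁ x)) (DAlg δ (cutVec s₂ y)))
        (DAlg δ (cutVec s₃ z)) := by
  simp only [DAlg, cutVec, Cminus]
  rcases Cminus s₁ x with _ | f₁ <;> rcases Cminus s₂ y with _ | f₂ <;>
    rcases Cminus s₃ z with _ | f₃ <;>
    simp only [lcomb_single, lcomb_zero_left, one_smul, DFm_append, forestMul_zero_left,
      forestMul_zero_right]

theorem DPm_I (τ : T d) : DPm δ (PTm.I τ) = mapDomain (fun p => (PTm.I p.1, p.2)) (DI δ τ) :=
  rfl

theorem DFm_of_Cminus_eq_some (hδ : 0 < δ) (σ : T d) {ρ : T d} {f : List (PTm d)}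
    (hρ : TrivialCoproduct δ ρ) (h : Cminus σ ρ = some f) : DFm δ f = single (f, []) 1 := by
  induction σ generalizing ρ f with
  | one =>
    cases ρ <;> simp only [Cminus, Option.some.injEq] at h <;> subst h <;>
      simp [DFm_singleton, DPm_I, DI_of_trivialCoproduct hρ]
  | X i =>
    cases ρ with
    | one => simp [Cminus] at h
    | X j => simp [TrivialCoproduct, T.order] at hρ
    | _ =>
      simp only [Cminus, Option.some.injEq] at h
      subst h
      simp [DFm_singleton, DPm_Im_of_trivialCoproduct hδ i hρ]
  | Xi =>
    cases ρ <;> simp only [Cminus, Option.some.injEq, reduceCtorEq] at h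
    subst h
    rfl
  | prod s₁ s₂ s₃ ih₁ ih₂ ih₃ =>
    cases ρ with
    | prod x y z =>
      obtain ⟨hx, hy, hz⟩ := hρ.of_prod hδ
      obtain ⟨f₁, f₂, f₃, h₁, h₂, h₃, rfl⟩ := Cminus_prod_prod_eq_some h
      simp [DFm_append, ih₁ hx h₁, ih₂ hy h₂, ih₃ hz h₃, forestMul_single_single]
    | _ => simp [Cminus] at h

end Cuts

section CoInteraction

variable {d : ℕ} {δ : ℝ}

/-- `(F ⊗ Id) X`, with a planted tree `I(τ̄)` in the left factor of `X` represented by `τ̄`. -/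
noncomputable def rTensor (F : T d → List (PTm d) →₀ ℝ) (X : (T d × List (PTm d)) →₀ ℝ) :
    (List (PTm d) × List (PTm d)) →₀ ℝ :=
  lcomb X fun p => mapDomain (·, p.2) (F p.1)

theorem DAlg_cutVec_of_trivialCoproduct (hδ : 0 < δ) (σ : T d) {ρ : T d}
    (hρ : TrivialCoproduct δ ρ) : DAlg δ (cutVec σ ρ) = rTensor (cutVec σ) (DI δ ρ) := by
  rw [rTensor, DI_of_trivialCoproduct hρ, lcomb_single, one_smul, DAlg, cutVec]
  split
  next f h => simp [DFm_of_Cminus_eq_some hδ σ hρ h]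
  next => simp

theorem DAlg_cutVec_one (ρ : T d) : DAlg δ (cutVec T.one ρ) = rTensor (cutVec T.one) (DI δ ρ) := by
  simp [DAlg, rTensor, cutVec_one_left, DFm_singleton, DPm_I, mapDomain_eq_lcomb, lcomb_lcomb]

theorem rTensor_DI_prod_of_not_lt {a b c : T d} (h : ¬ T.order δ (T.prod a b c) < -2)
    (F : T d → List (PTm d) →₀ ℝ) :
    rTensor F (DI δ (T.prod a b c)) =
      mapDomain (·, [PTm.I (T.prod a b c)]) (F T.one) +
        (if T.inTildeN δ (T.prod a b c) then
          ∑ j : Fin d, mapDomain (·, [PTm.Ip j (T.prod a b c)]) (F (T.X j)) else 0) +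
        rTensor F (Du δ (T.prod a b c)) := by
  rw [rTensor, DI, if_neg h, lcomb_add_left, lcomb_add_left, lcomb_single, one_smul,
    apply_ite (lcomb · _), lcomb_sum_left, lcomb_zero_left]
  simp only [lcomb_single, one_smul]
  rfl

theorem lcomb_imEmb_eq_mapDomain_cutVec (i : Fin d) (τ : T d) (g : List (PTm d)) :
    lcomb ((imEmb i τ).elim 0 fun q => single (q, g) (1 : ℝ)) (fun q => single ([q.1], q.2) 1) =
      mapDomain (·, g) (cutVec (T.X i) τ) := by
  cases τ with
  | X j => by_cases hj : j = i <;> simp [imEmb, cutVec, Cminus, hj]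
  | _ => simp [imEmb, cutVec, Cminus]

theorem DAlg_cutVec_X_prod {i : Fin d} {x y z : T d} (h : ¬ T.order δ (T.prod x y z) < -2) :
    DAlg δ (cutVec (T.X i) (T.prod x y z)) = rTensor (cutVec (T.X i)) (DI δ (T.prod x y z)) := by
  have hX : ∑ j : Fin d, mapDomain (·, [PTm.Ip j (T.prod x y z)]) (cutVec (T.X i) (T.X j)) =
      single ([PTm.Ip i (T.X i)], [PTm.Ip i (T.prod x y z)]) 1 := by
    rw [Finset.sum_eq_single_of_mem i (Finset.mem_univ i) fun j _ hj => by
      simp [cutVec, Cminus, hj]]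
    simp [cutVec, Cminus]
  have hone : cutVec (T.X i) (T.one : T d) = 0 := rfl
  have hcut : cutVec (T.X i) (T.prod x y z) = single [PTm.Im i (T.prod x y z)] 1 := rfl
  rw [rTensor_DI_prod_of_not_lt h, hX, hone, Finsupp.mapDomain_zero, zero_add, DAlg, hcut,
    lcomb_single, one_smul, DFm_singleton, DPm_Im_prod, lcomb_add_left, lcomb_lcomb,
    apply_ite (lcomb · _), lcomb_zero_left, lcomb_single, one_smul, add_comm]
  congr 1
  exact lcomb_congr fun p _ => lcomb_imEmb_eq_mapDomain_cutVec i p.1 p.2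

theorem DAlg_cutVec_X (hδ : 0 < δ) (i : Fin d) (ρ : T d) :
    DAlg δ (cutVec (T.X i) ρ) = rTensor (cutVec (T.X i)) (DI δ ρ) := by
  cases ρ with
  | one => simp [DAlg, rTensor, cutVec, Cminus, lcomb_DI_one]
  | X j =>
    by_cases hj : j = i
    · subst hj
      simp [DAlg, rTensor, cutVec, Cminus, lcomb_DI_X, DFm_singleton, DPm, DIp]
    · simp [DAlg, rTensor, cutVec, Cminus, lcomb_DI_X, hj]
  | Xi => exact DAlg_cutVec_of_trivialCoproduct hδ _ (.inr rfl)
  | prod x y z =>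
    by_cases h : T.order δ (T.prod x y z) < -2
    · exact DAlg_cutVec_of_trivialCoproduct hδ _ (.inl h)
    · exact DAlg_cutVec_X_prod h

theorem DAlg_cutVec_Xi (hδ : 0 < δ) (ρ : T d) :
    DAlg δ (cutVec T.Xi ρ) = rTensor (cutVec T.Xi) (DI δ ρ) := by
  cases ρ with
  | one => simp [DAlg, rTensor, cutVec, Cminus, lcomb_DI_one]
  | X j => simp [DAlg, rTensor, cutVec, Cminus, lcomb_DI_X]
  | Xi => exact DAlg_cutVec_of_trivialCoproduct hδ _ (.inr rfl)
  | prod x y z =>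
    by_cases h : T.order δ (T.prod x y z) < -2
    · exact DAlg_cutVec_of_trivialCoproduct hδ _ (.inl h)
    · rw [rTensor_DI_prod_of_not_lt h]
      simp [DAlg, rTensor, cutVec, Cminus, lcomb_Du_prod]

theorem DAlg_cutVec_prod_eq_rTensor_Du {s₁ s₂ s₃ : T d}
    (ih₁ : ∀ ρ, DAlg δ (cutVec s₁ ρ) = rTensor (cutVec s₁) (DI δ ρ))
    (ih₂ : ∀ ρ, DAlg δ (cutVec s₂ ρ) = rTensor (cutVec s₂) (DI δ ρ))
    (ih₃ : ∀ ρ, DAlg δ (cutVec s₃ ρ) = rTensor (cutVec s₃) (DI δ ρ)) (x y z : T d) :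
    DAlg δ (cutVec (T.prod s₁ s₂ s₃) (T.prod x y z)) =
      rTensor (cutVec (T.prod s₁ s₂ s₃)) (Du δ (T.prod x y z)) := by
  rw [DAlg_cutVec_prod_prod, ih₁, ih₂, ih₃]
  unfold rTensor
  rw [lcomb_Du_prod, forestMul_lcomb_left, forestMul_lcomb_left]
  refine lcomb_congr fun p _ => ?_
  rw [forestMul_lcomb_right (DI δ y), forestMul_lcomb_left]
  refine lcomb_congr fun q _ => ?_
  rw [forestMul_lcomb_right]
  exact lcomb_congr fun s _ => (mapDomain_cutVec_prod ..).symm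

theorem DAlg_cutVec_prod (hδ : 0 < δ) {s₁ s₂ s₃ : T d}
    (ih₁ : ∀ ρ, DAlg δ (cutVec s₁ ρ) = rTensor (cutVec s₁) (DI δ ρ))
    (ih₂ : ∀ ρ, DAlg δ (cutVec s₂ ρ) = rTensor (cutVec s₂) (DI δ ρ))
    (ih₃ : ∀ ρ, DAlg δ (cutVec s₃ ρ) = rTensor (cutVec s₃) (DI δ ρ)) (ρ : T d) :
    DAlg δ (cutVec (T.prod s₁ s₂ s₃) ρ) = rTensor (cutVec (T.prod s₁ s₂ s₃)) (DI δ ρ) := by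
  cases ρ with
  | one => simp [DAlg, rTensor, cutVec, Cminus, lcomb_DI_one]
  | X j => simp [DAlg, rTensor, cutVec, Cminus, lcomb_DI_X]
  | Xi => exact DAlg_cutVec_of_trivialCoproduct hδ _ (.inr rfl)
  | prod x y z =>
    by_cases h : T.order δ (T.prod x y z) < -2
    · exact DAlg_cutVec_of_trivialCoproduct hδ _ (.inl h)
    · rw [rTensor_DI_prod_of_not_lt h, ← DAlg_cutVec_prod_eq_rTensor_Du ih₁ ih₂ ih₃]
      simp [cutVec, Cminus]

theorem DAlg_cutVec (hδ : 0 < δ) (σ ρ : T d) :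
    DAlg δ (cutVec σ ρ) = rTensor (cutVec σ) (DI δ ρ) := by
  induction σ generalizing ρ with
  | one => exact DAlg_cutVec_one ρ
  | X i => exact DAlg_cutVec_X hδ i ρ
  | Xi => exact DAlg_cutVec_Xi hδ ρ
  | prod s₁ s₂ s₃ ih₁ ih₂ ih₃ => exact DAlg_cutVec_prod hδ ih₁ ih₂ ih₃ ρ

end CoInteraction

section Subtrees

variable {d : ℕ} {δ : ℝ}

theorem one_mem_subs (τ : T d) : T.one ∈ subs τ := by
  cases τ <;> simp [subs]

theorem self_mem_subs (τ : T d) : τ ∈ subs τ := by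
  induction τ with
  | prod a b c iha ihb ihc => simp [subs, iha, ihb, ihc]
  | _ => simp [subs]

theorem mem_subs_prod {t a b c : T d} :
    t ∈ subs (T.prod a b c) ↔ t = T.one ∨ (∃ j, t = T.X j) ∨
      ∃ u v w, u ∈ subs a ∧ v ∈ subs b ∧ w ∈ subs c ∧ t = T.prod u v w := by
  simp only [subs, Finset.mem_union, Finset.mem_singleton, Finset.mem_image, Finset.mem_univ,
    true_and, Finset.mem_product, Prod.exists]
  grind

theorem subs_trans {ρ σ τ : T d} (hσ : σ ∈ subs ρ) (hτ : τ ∈ subs σ) : τ ∈ subs ρ := by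
  induction ρ generalizing σ τ with
  | prod a b c iha ihb ihc =>
    rw [mem_subs_prod] at hσ ⊢
    rcases hσ with rfl | ⟨j, rfl⟩ | ⟨u, v, w, hu, hv, hw, rfl⟩
    · simp_all [subs]
    · simp [subs] at hτ
      aesop
    · rw [mem_subs_prod] at hτ
      rcases hτ with h | h | ⟨u', v', w', hu', hv', hw', rfl⟩
      · exact .inl h
      · exact .inr (.inl h)
      · exact .inr (.inr ⟨u', v', w', iha hu hu', ihb hv hv', ihc hw hw', rfl⟩)
  | _ => simp [subs] at hσ; aesop (add simp subs)

theorem mem_subs_of_Cminus_eq_some {σ ρ : T d} {f : List (PTm d)} (h : Cminus σ ρ = some f) :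
    σ ∈ subs ρ := by
  induction ρ generalizing σ f with
  | prod x y z ihx ihy ihz =>
    cases σ with
    | prod s₁ s₂ s₃ =>
      obtain ⟨f₁, f₂, f₃, h₁, h₂, h₃, -⟩ := Cminus_prod_prod_eq_some h
      exact mem_subs_prod.2 (.inr (.inr ⟨s₁, s₂, s₃, ihx h₁, ihy h₂, ihz h₃, rfl⟩))
    | _ => simp_all [Cminus, subs]
  | _ => cases σ <;> simp_all [Cminus, subs]

theorem cutVec_eq_zero_of_notMem_subs {σ ρ : T d} (h : σ ∉ subs ρ) : cutVec σ ρ = 0 := by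
  rw [cutVec]
  split
  next f hf => exact absurd (mem_subs_of_Cminus_eq_some hf) h
  next => rfl

theorem exists_of_mem_support_Du_prod {a b c : T d} {p : T d × List (PTm d)}
    (hp : p ∈ (Du δ (T.prod a b c)).support) :
    ∃ u ∈ (DI δ a).support, ∃ v ∈ (DI δ b).support, ∃ w ∈ (DI δ c).support,
      p.1 = T.prod u.1 v.1 w.1 := by
  rw [← lcomb_single_one (Du δ _), lcomb_Du_prod] at hp
  obtain ⟨u, hu, hp⟩ := exists_mem_support_of_mem_support_lcomb hp
  obtain ⟨v, hv, hp⟩ := exists_mem_support_of_mem_support_lcomb hp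
  obtain ⟨w, hw, hp⟩ := exists_mem_support_of_mem_support_lcomb hp
  rw [Finsupp.support_single _ one_ne_zero, Finset.mem_singleton] at hp
  exact ⟨u, hu, v, hv, w, hw, by rw [hp]⟩

theorem fst_mem_subs_of_mem_support_DI {ρ : T d} {p : T d × List (PTm d)}
    (hp : p ∈ (DI δ ρ).support) : p.1 ∈ subs ρ := by
  induction ρ generalizing p with
  | prod a b c iha ihb ihc =>
    by_cases h : T.order δ (T.prod a b c) < -2
    · rw [DI_of_trivialCoproduct (.inl h), Finsupp.mem_support_single] at hp
      rw [hp.1]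
      exact self_mem_subs _
    rw [DI, if_neg h] at hp
    rcases Finset.mem_union.1 (Finsupp.support_add hp) with hp | hDu
    · rcases Finset.mem_union.1 (Finsupp.support_add hp) with hone | hX
      · rw [Finsupp.mem_support_single] at hone
        rw [hone.1]
        exact one_mem_subs _
      · split_ifs at hX
        · obtain ⟨j, -, hj⟩ := Finset.mem_biUnion.1 (Finsupp.support_finsetSum hX)
          rw [(Finsupp.mem_support_single _ _ _).1 hj |>.1]
          exact mem_subs_prod.2 (.inr (.inl ⟨j, rfl⟩))
        · simp at hX
    · obtain ⟨u, hu, v, hv, w, hw, hp⟩ := exists_of_mem_support_Du_prod hDu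
      exact mem_subs_prod.2 (.inr (.inr ⟨_, _, _, iha hu, ihb hv, ihc hw, hp⟩))
  | X i =>
    rcases Finset.mem_union.1 (Finsupp.support_add hp) with h | h <;>
      simp [subs, (Finsupp.mem_support_single _ _ _).1 h |>.1]
  | _ =>
    rw [DI, Finsupp.mem_support_single] at hp
    simp [subs, hp.1]

end Subtrees

section Renormalisation

variable {d : ℕ} {δ : ℝ}

noncomputable def qF : T d → List (PTm d) →₀ ℝ
  | T.prod a b c => single [PTm.I a, PTm.I b, PTm.I c] 1
  | _ => 0

theorem Rmap_prod (r : T d → ℝ) (a b c : T d) :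
    Rmap r (T.prod a b c) =
      qF (T.prod a b c) + ∑ τ' ∈ subs (T.prod a b c), r τ' • cutVec τ' (T.prod a b c) :=
  rfl

theorem Rmap_prod_eq_of_subs_subset (r : T d → ℝ) {x y z : T d} {S : Finset (T d)}
    (hS : subs (T.prod x y z) ⊆ S) :
    Rmap r (T.prod x y z) = qF (T.prod x y z) + ∑ τ' ∈ S, r τ' • cutVec τ' (T.prod x y z) := by
  rw [Rmap_prod, Finset.sum_subset hS fun τ' _ h => by
    rw [cutVec_eq_zero_of_notMem_subs h, smul_zero]]

theorem DFm_I_cons (τ : T d) (l : List (PTm d)) :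
    DFm δ (PTm.I τ :: l) =
      lcomb (DI δ τ) fun p => lcomb (DFm δ l) fun s => single (PTm.I p.1 :: s.1, p.2 ++ s.2) 1 := by
  rw [DFm_cons, DPm_I, mapDomain_eq_lcomb, lcomb_lcomb]
  simp

theorem DAlg_qF (a b c : T d) : DAlg δ (qF (T.prod a b c)) = rTensor qF (Du δ (T.prod a b c)) := by
  simp [DAlg, qF, rTensor, lcomb_Du_prod, DFm_I_cons, lcomb_lcomb]

theorem Qcond.exists_eq_prod {τ : T d} (h : Qcond δ τ) : ∃ a b c, τ = T.prod a b c := by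
  cases τ with
  | prod a b c => exact ⟨a, b, c, rfl⟩
  | _ => exact h.elim

theorem rTensor_Rmap_Du (r : T d → ℝ) (a b c : T d) :
    rTensor (Rmap r) (Du δ (T.prod a b c)) = rTensor qF (Du δ (T.prod a b c)) +
      ∑ τ' ∈ subs (T.prod a b c), r τ' • rTensor (cutVec τ') (Du δ (T.prod a b c)) := by
  simp only [rTensor, ← lcomb_smul_right, ← lcomb_sum_right, ← lcomb_add_right]
  refine lcomb_congr fun p hp => ?_
  obtain ⟨u, hu, v, hv, w, hw, hp⟩ := exists_of_mem_support_Du_prod hp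
  have hsub : subs p.1 ⊆ subs (T.prod a b c) := fun t ht =>
    subs_trans (mem_subs_prod.2 (.inr (.inr ⟨_, _, _, fst_mem_subs_of_mem_support_DI hu,
      fst_mem_subs_of_mem_support_DI hv, fst_mem_subs_of_mem_support_DI hw, hp⟩))) ht
  rw [hp] at hsub ⊢
  rw [Rmap_prod_eq_of_subs_subset r hsub, Finsupp.mapDomain_add, Finsupp.mapDomain_finsetSum]
  simp only [Finsupp.mapDomain_smul]

end Renormalisation

theorem coproduct_renormalisation_commute_general (d : ℕ) (δ : ℝ) (hδ : 0 < δ)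
    (r : T d → ℝ)
    (hsupp : ∀ τ : T d, r τ ≠ 0 → Qcond δ τ)
    (a b c : T d) :
    ((Rmap r (T.prod a b c)).sum fun f cf => cf • DFm δ f) =
      ((Du δ (T.prod a b c)).sum fun p cp =>
        cp • ((Rmap r p.1).sum fun f cf =>
          Finsupp.single (f, p.2) cf)) := by
  have hcut : ∀ τ' ∈ subs (T.prod a b c), r τ' • DAlg δ (cutVec τ' (T.prod a b c)) =
      r τ' • rTensor (cutVec τ') (Du δ (T.prod a b c)) := by
    intro τ' _
    by_cases hr : r τ' = 0
    · simp [hr]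
    obtain ⟨s₁, s₂, s₃, rfl⟩ := (hsupp τ' hr).exists_eq_prod
    rw [DAlg_cutVec_prod_eq_rTensor_Du (DAlg_cutVec hδ s₁) (DAlg_cutVec hδ s₂)
      (DAlg_cutVec hδ s₃)]
  calc _ = DAlg δ (Rmap r (T.prod a b c)) := (lcomb_eq_sum _ _).symm
    _ = DAlg δ (qF (T.prod a b c)) +
          ∑ τ' ∈ subs (T.prod a b c), r τ' • DAlg δ (cutVec τ' (T.prod a b c)) := by
      simp only [DAlg, Rmap_prod, lcomb_add_left, lcomb_sum_left, lcomb_smul_left]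
    _ = rTensor (Rmap r) (Du δ (T.prod a b c)) := by
      rw [rTensor_Rmap_Du, DAlg_qF, Finset.sum_congr rfl hcut]
    _ = _ := lcomb_eq_sum _ _

/-- the coproduct intertwines with a local renormalisation
operator `R` built from a permutation-invariant counterterm map `r` supported
on `𝒬`: for every ternary-product tree `τ ∈ 𝒩̊ ∪ 𝒲̊`, `Δ R τ = (R ⊗ Id) Δ τ`. -/
theorem coproduct_renormalisation_commute (d : ℕ) (δ : ℝ) (hδ : 0 < δ)
    (r : T d → ℝ)
    (hsupp : ∀ τ : T d, r τ ≠ 0 → Qcond δ τ)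
    (hperm : ∀ τ τ' : T d, TEquiv τ τ' → r τ = r τ')
    (a b c : T d) (h : T.order δ (T.prod a b c) ≤ 0) :
    ((Rmap r (T.prod a b c)).sum fun f cf => cf • DFm δ f) =
      ((Du δ (T.prod a b c)).sum fun p cp =>
        cp • ((Rmap r p.1).sum fun f cf =>
          Finsupp.single (f, p.2) cf)) :=
  coproduct_renormalisation_commute_general d δ hδ r hsupp a b c
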